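/- For every finite set Γ ⊂ Z^d and every s ∈ (0,1), one has Σ_{i ∈ Γ} Σ_{j ∈ Z^d \ Γ} |i - j|_∞^{-(d+s)} ≥ c (#Γ)^{(d-s)/d}, where c > 0 depends only on s. -/

import Mathlib

/-! For `i ∈ Γ` with `#Γ = N`, take the least `R` whose cube `i + [-R, R]^d` has at least `2N`
points, so that `R^d < 2N`. At least `N` of these points lie outside `Γ`, each at `ℓ^∞`-distance
between `1` and `R`, hence the inner sum at `i` is at least `N R^{-(d+s)} ≥ N^{-s/d} / 4`.
Summing over the `N` points of `Γ` gives `N^{(d-s)/d} / 4`. -/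

open scoped ENNReal
open Finset

variable {ι : Type*} [Fintype ι]

theorem card_Icc_sub_add_const [DecidableEq ι] (i : ι → ℤ) (R : ℕ) :
    #(Icc (i - fun _ => (R : ℤ)) (i + fun _ => (R : ℤ))) = (2 * R + 1) ^ Fintype.card ι := by
  have h : ∀ n, #(Icc (i n - R) (i n + R)) = 2 * R + 1 := fun n => by rw [Int.card_Icc]; omega
  simp [Pi.card_Icc, h]

theorem sup_natAbs_sub_le_of_mem_Icc [DecidableEq ι] {i j : ι → ℤ} {R : ℕ}
    (hj : j ∈ Icc (i - fun _ => (R : ℤ)) (i + fun _ => (R : ℤ))) :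
    (univ.sup fun n => (i n - j n).natAbs) ≤ R := by
  rw [mem_Icc] at hj
  refine Finset.sup_le fun n _ => ?_
  have hlo := hj.1 n
  have hhi := hj.2 n
  simp only [Pi.sub_apply, Pi.add_apply] at hlo hhi
  omega

theorem one_le_sup_natAbs_sub_of_ne {i j : ι → ℤ} (h : i ≠ j) :
    1 ≤ univ.sup fun n => (i n - j n).natAbs := by
  obtain ⟨n, hn⟩ := Function.ne_iff.mp h
  exact le_trans (by omega) (le_sup (f := fun n => (i n - j n).natAbs) (mem_univ n))

theorem exists_pos_pow_lt_le_two_mul_add_one_pow {N d : ℕ} (hN : 1 ≤ N) (hd : 1 ≤ d) :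
    ∃ R : ℕ, 0 < R ∧ R ^ d < 2 * N ∧ 2 * N ≤ (2 * R + 1) ^ d := by
  classical
  have hex : ∃ R, 2 * N ≤ (2 * R + 1) ^ d :=
    ⟨N, le_trans (by omega) (Nat.le_self_pow (by omega) _)⟩
  set R := Nat.find hex
  have hRspec : 2 * N ≤ (2 * R + 1) ^ d := Nat.find_spec hex
  have hR : 0 < R := by
    by_contra! h0
    rw [Nat.le_zero.mp h0, mul_zero, zero_add, one_pow] at hRspec
    omega
  have hRd : ¬ 2 * N ≤ (2 * (R - 1) + 1) ^ d := Nat.find_min hex (by omega)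
  refine ⟨R, hR, ?_, hRspec⟩
  have := Nat.pow_le_pow_left (show R ≤ 2 * (R - 1) + 1 by omega) d
  omega

theorem rpow_add_le_of_rpow_le {N R d s : ℝ} (hR : 0 < R) (hd : 0 < d) (hs0 : 0 ≤ s)
    (hsd : s ≤ d) (hRN : R ^ d ≤ 2 * N) : R ^ (d + s) ≤ 4 * N * N ^ (s / d) := by
  have hN : 0 ≤ N := by nlinarith [Real.rpow_pos_of_pos hR d]
  have hRs : R ^ s ≤ 2 * N ^ (s / d) :=
    calc R ^ s = (R ^ d) ^ (s / d) := by rw [← Real.rpow_mul hR.le, mul_div_cancel₀ s hd.ne']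
      _ ≤ (2 * N) ^ (s / d) := by gcongr
      _ = 2 ^ (s / d) * N ^ (s / d) := Real.mul_rpow (by norm_num) hN
      _ ≤ 2 * N ^ (s / d) := by
        gcongr
        exact Real.rpow_le_self_of_one_le (by norm_num) ((div_le_one hd).mpr hsd)
  calc R ^ (d + s) = R ^ d * R ^ s := Real.rpow_add hR d s
    _ ≤ (2 * N) * (2 * N ^ (s / d)) := by gcongr
    _ = 4 * N * N ^ (s / d) := by ring

theorem rpow_neg_div_le_mul_rpow_neg {N R d s : ℝ} (hR : 0 < R) (hd : 0 < d) (hs0 : 0 ≤ s)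
    (hsd : s ≤ d) (hN : 0 < N) (hRN : R ^ d ≤ 2 * N) :
    N ^ (-(s / d)) / 4 ≤ N * R ^ (-(d + s)) := by
  rw [Real.rpow_neg hR.le, Real.rpow_neg hN.le, ← div_eq_mul_inv]
  calc (N ^ (s / d))⁻¹ / 4 = N / (4 * N * N ^ (s / d)) := by field_simp
    _ ≤ N / R ^ (d + s) := by
      gcongr
      exact rpow_add_le_of_rpow_le hR hd hs0 hsd hRN

theorem sum_le_tsum_subtype {α : Type*} {t : Set α} (f : α → ℝ≥0∞) {S : Finset α}
    (hS : ∀ j ∈ S, j ∈ t) : ∑ j ∈ S, f j ≤ ∑' j : t, f j := by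
  rw [_root_.tsum_subtype]
  calc ∑ j ∈ S, f j = ∑ j ∈ S, t.indicator f j :=
        sum_congr rfl fun j hj => (Set.indicator_of_mem (hS j hj) f).symm
    _ ≤ _ := ENNReal.sum_le_tsum S

theorem rpow_neg_div_card_le_tsum_compl [DecidableEq ι] [Nonempty ι] {s : ℝ} (hs0 : 0 ≤ s)
    (hsd : s ≤ Fintype.card ι) {Γ : Finset (ι → ℤ)} {i : ι → ℤ} (hi : i ∈ Γ) :
    ENNReal.ofReal ((#Γ : ℝ) ^ (-(s / Fintype.card ι)) / 4) ≤
      ∑' j : {j : ι → ℤ // j ∉ Γ}, ENNReal.ofReal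
        (((univ.sup fun n => (i n - j.1 n).natAbs : ℕ) : ℝ) ^ (-((Fintype.card ι : ℝ) + s))) := by
  set d := Fintype.card ι
  have hN : 0 < #Γ := card_pos.mpr ⟨i, hi⟩
  obtain ⟨R, hR, hRN, hNR⟩ :=
    exists_pos_pow_lt_le_two_mul_add_one_pow hN (Fintype.card_pos (α := ι))
  set B := Icc (i - fun _ => (R : ℤ)) (i + fun _ => (R : ℤ))
  have hcard : #Γ ≤ #(B \ Γ) := by
    have := le_card_sdiff Γ B
    rw [card_Icc_sub_add_const] at this
    omega
  have hterm : ∀ j ∈ B \ Γ, ENNReal.ofReal ((R : ℝ) ^ (-((d : ℝ) + s))) ≤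
      ENNReal.ofReal (((univ.sup fun n => (i n - j n).natAbs : ℕ) : ℝ) ^ (-((d : ℝ) + s))) := by
    intro j hj
    obtain ⟨hjB, hjΓ⟩ := mem_sdiff.mp hj
    have h1 := one_le_sup_natAbs_sub_of_ne (ne_of_mem_of_not_mem hi hjΓ)
    refine ENNReal.ofReal_le_ofReal (Real.rpow_le_rpow_of_nonpos (by exact_mod_cast h1)
      (by exact_mod_cast sup_natAbs_sub_le_of_mem_Icc hjB) (by linarith))
  have hreal := rpow_neg_div_le_mul_rpow_neg (N := #Γ) (R := R) (d := d) (s := s)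
    (by positivity) (by positivity) hs0 hsd (by exact_mod_cast hN) (by exact_mod_cast hRN.le)
  calc ENNReal.ofReal ((#Γ : ℝ) ^ (-(s / d)) / 4)
      ≤ ENNReal.ofReal (#Γ * (R : ℝ) ^ (-((d : ℝ) + s))) := ENNReal.ofReal_le_ofReal hreal
    _ = #Γ * ENNReal.ofReal ((R : ℝ) ^ (-((d : ℝ) + s))) := by
      rw [ENNReal.ofReal_mul (Nat.cast_nonneg _), ENNReal.ofReal_natCast]
    _ ≤ #(B \ Γ) * ENNReal.ofReal ((R : ℝ) ^ (-((d : ℝ) + s))) := by gcongr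
    _ = ∑ j ∈ B \ Γ, ENNReal.ofReal ((R : ℝ) ^ (-((d : ℝ) + s))) := by
      rw [sum_const, nsmul_eq_mul]
    _ ≤ ∑ j ∈ B \ Γ, ENNReal.ofReal
          (((univ.sup fun n => (i n - j n).natAbs : ℕ) : ℝ) ^ (-((d : ℝ) + s))) := sum_le_sum hterm
    _ ≤ _ := sum_le_tsum_subtype (t := {j | j ∉ Γ}) _ fun j hj => (mem_sdiff.mp hj).2

/-- discrete nonlocal isoperimetric inequality: for every finite `Γ ⊂ ℤ^d`,
`Σ_{i ∈ Γ} Σ_{j ∉ Γ} |i - j|_∞^{-(d+s)} ≥ c (#Γ)^{(d-s)/d}` with `c > 0` depending only on `s`. -/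
theorem discrete_nonlocal_isoperimetric (s : ℝ) (hs : s ∈ Set.Ioo (0 : ℝ) 1) :
    ∃ c : ℝ, 0 < c ∧
      ∀ (d : ℕ), 1 ≤ d → ∀ Γ : Finset (Fin d → ℤ),
        ENNReal.ofReal (c * (Γ.card : ℝ) ^ (((d : ℝ) - s) / d)) ≤
          ∑ i ∈ Γ, ∑' j : {j : Fin d → ℤ // j ∉ Γ},
            ENNReal.ofReal
              (((Finset.univ.sup fun n => (i n - j.1 n).natAbs : ℕ) : ℝ) ^ (-((d : ℝ) + s))) := by
  obtain ⟨hs0, hs1⟩ := hs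
  refine ⟨1 / 4, by norm_num, fun d hd Γ => ?_⟩
  have : Nonempty (Fin d) := Fin.pos_iff_nonempty.mp hd
  have hsd : s < d := by linarith [(Nat.one_le_cast (α := ℝ)).mpr hd]
  have hsd' : s ≤ Fintype.card (Fin d) := by rw [Fintype.card_fin]; exact hsd.le
  have hpow : (#Γ : ℝ) ^ (((d : ℝ) - s) / d) = #Γ * (#Γ : ℝ) ^ (-(s / d)) := by
    have hexp : ((d : ℝ) - s) / d = 1 + -(s / d) := by
      field_simp
      ring
    have hne : ((d : ℝ) - s) / d ≠ 0 := (div_pos (by linarith) (by positivity)).ne'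
    rw [hexp] at hne ⊢
    rw [Real.rpow_add' (Nat.cast_nonneg _) hne, Real.rpow_one]
  calc ENNReal.ofReal (1 / 4 * (#Γ : ℝ) ^ (((d : ℝ) - s) / d))
      = ∑ _i ∈ Γ, ENNReal.ofReal ((#Γ : ℝ) ^ (-(s / d)) / 4) := by
        rw [sum_const, nsmul_eq_mul, ← ENNReal.ofReal_natCast,
          ← ENNReal.ofReal_mul (by positivity), hpow]
        ring_nf
    _ ≤ _ := sum_le_sum fun i hi => by
        simpa only [Fintype.card_fin] using rpow_neg_div_card_le_tsum_compl hs0.le hsd' hi
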